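/- Let φ_1,...,φ_K be unit-norm vectors in C^{N_p} with K ≥ N_p, and define the K×K Gram-type matrix Φ̄ with entries Φ̄_{ij} = |⟨φ_i, φ_j⟩|². Then the spectral radius of Φ̄ is at least K/N_p. -/

import Mathlib

/-!
Since `Φ̄` is real symmetric, the Rayleigh quotient at the all-ones vector is bounded by its top
eigenvalue, so `K ρ(Φ̄) ≥ ∑_{ij} Φ̄_{ij}`. This sum is the squared Frobenius norm of the Gram matrix
`MᴴM`, where `M` is the `N_p × K` matrix of coordinates of the `φ_k`; it equals that of `MMᴴ`, which
by Cauchy–Schwarz on the diagonal is at least `(tr MMᴴ)² / N_p = K² / N_p` (the Welch bound).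
-/

/-- Spectral radius of a real square matrix: the largest absolute value of a
(complex) eigenvalue. -/
noncomputable def specRad {n : ℕ} (A : Matrix (Fin n) (Fin n) ℝ) : ℝ :=
  sSup {r : ℝ | ∃ z ∈ spectrum ℂ (A.map (fun x => (x : ℂ))), r = ‖z‖}

/-- The squared-correlation (Gram-type) matrix `Φ̄_{ij} = |⟨φ_i, φ_j⟩|²`. -/
noncomputable def corrMat {K Np : ℕ} (φ : Fin K → EuclideanSpace ℂ (Fin Np)) :
    Matrix (Fin K) (Fin K) ℝ :=
  fun i j => ‖(inner ℂ (φ i) (φ j) : ℂ)‖ ^ 2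

open Matrix RCLike Module.End

namespace Matrix

variable {𝕜 m n : Type*} [RCLike 𝕜] [Fintype m] [Fintype n]

lemma trace_conjTranspose_mul_self_eq_sum_norm_sq (A : Matrix m n 𝕜) :
    (Aᴴ * A).trace = ((∑ i, ∑ j, ‖A i j‖ ^ 2 : ℝ) : 𝕜) := by
  rw [← star_vec_dotProduct_vec]
  simp only [dotProduct, Pi.star_apply, vec, RCLike.star_def, RCLike.conj_mul]
  push_cast
  rw [← Finset.univ_product_univ, Finset.sum_product, Finset.sum_comm]

lemma sum_norm_sq_conjTranspose_mul_self_eq_mul_conjTranspose (A : Matrix m n 𝕜) :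
    ∑ i, ∑ j, ‖(Aᴴ * A) i j‖ ^ 2 = ∑ i, ∑ j, ‖(A * Aᴴ) i j‖ ^ 2 := by
  have key : ((Aᴴ * A)ᴴ * (Aᴴ * A)).trace = ((A * Aᴴ)ᴴ * (A * Aᴴ)).trace := by
    simp only [conjTranspose_mul, conjTranspose_conjTranspose, Matrix.mul_assoc]
    rw [trace_mul_comm]
    simp only [Matrix.mul_assoc]
  rw [trace_conjTranspose_mul_self_eq_sum_norm_sq,
    trace_conjTranspose_mul_self_eq_sum_norm_sq] at key
  exact_mod_cast key

lemma norm_trace_sq_le_card_mul_sum_norm_sq (A : Matrix n n 𝕜) :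
    ‖A.trace‖ ^ 2 ≤ Fintype.card n * ∑ i, ∑ j, ‖A i j‖ ^ 2 :=
  calc ‖A.trace‖ ^ 2 ≤ (∑ i, ‖A i i‖) ^ 2 := by
        gcongr
        exact norm_sum_le _ _
    _ ≤ Fintype.card n * ∑ i, ‖A i i‖ ^ 2 := sq_sum_le_card_mul_sum_sq
    _ ≤ Fintype.card n * ∑ i, ∑ j, ‖A i j‖ ^ 2 := by
        gcongr with i
        exact Finset.single_le_sum (f := fun j ↦ ‖A i j‖ ^ 2) (fun _ _ ↦ by positivity)
          (Finset.mem_univ i)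

end Matrix

section InnerProductSpace

variable {𝕜 E ι : Type*} [RCLike 𝕜] [NormedAddCommGroup E] [InnerProductSpace 𝕜 E] [Fintype ι]

lemma Matrix.trace_gram (v : ι → E) : (gram 𝕜 v).trace = ((∑ k, ‖v k‖ ^ 2 : ℝ) : 𝕜) := by
  simp [Matrix.trace, inner_self_eq_norm_sq_to_K]

variable [FiniteDimensional 𝕜 E]

theorem sq_sum_norm_sq_le_finrank_mul_sum_norm_inner_sq (v : ι → E) :
    (∑ k, ‖v k‖ ^ 2) ^ 2 ≤ Module.finrank 𝕜 E * ∑ i, ∑ j, ‖inner 𝕜 (v i) (v j)‖ ^ 2 := by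
  let M := of fun i j ↦ (stdOrthonormalBasis 𝕜 E).repr (v j) i
  have hgram : gram 𝕜 v = Mᴴ * M := gram_eq_conjTranspose_mul _ v
  have htrace : ‖(M * Mᴴ).trace‖ = ∑ k, ‖v k‖ ^ 2 := by
    rw [trace_mul_comm, ← hgram, trace_gram, norm_ofReal, abs_of_nonneg (by positivity)]
  calc (∑ k, ‖v k‖ ^ 2) ^ 2
      ≤ Fintype.card (Fin (Module.finrank 𝕜 E)) * ∑ a, ∑ b, ‖(M * Mᴴ) a b‖ ^ 2 :=
        htrace ▸ norm_trace_sq_le_card_mul_sum_norm_sq _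
    _ = Module.finrank 𝕜 E * ∑ i, ∑ j, ‖inner 𝕜 (v i) (v j)‖ ^ 2 := by
        rw [Fintype.card_fin, ← sum_norm_sq_conjTranspose_mul_self_eq_mul_conjTranspose, ← hgram]
        rfl

theorem LinearMap.IsSymmetric.exists_hasEigenvalue_re_inner_le [Nontrivial E]
    {T : E →ₗ[𝕜] E} (hT : T.IsSymmetric) :
    ∃ μ : ℝ, HasEigenvalue T μ ∧ ∀ x, re (inner 𝕜 (T x) x) ≤ μ * ‖x‖ ^ 2 := by
  refine ⟨_, hT.hasEigenvalue_iSup_of_finiteDimensional, fun x ↦ ?_⟩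
  rcases eq_or_ne x 0 with rfl | hx
  · simp
  let T' := LinearMap.toContinuousLinearMap T
  have hbdd : BddAbove
      (Set.range fun x : {x : E // x ≠ 0} ↦ re (inner 𝕜 (T x) x) / ‖(x : E)‖ ^ 2) :=
    ⟨‖T'‖, by rintro _ ⟨y, rfl⟩; exact (le_abs_self _).trans (T'.rayleighQuotient_le_norm y)⟩
  rw [← div_le_iff₀ (by positivity)]
  exact le_ciSup hbdd ⟨x, hx⟩

end InnerProductSpace

section SpectralRadius

variable {n : ℕ}

lemma norm_le_specRad {A : Matrix (Fin n) (Fin n) ℝ} {z : ℂ}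
    (hz : z ∈ spectrum ℂ (A.map (fun x => (x : ℂ)))) : ‖z‖ ≤ specRad A := by
  have hfin : {r : ℝ | ∃ z ∈ spectrum ℂ (A.map (fun x => (x : ℂ))), r = ‖z‖}.Finite := by
    refine ((finite_spectrum (A.map fun x => (x : ℂ))).image fun z : ℂ ↦ ‖z‖).subset ?_
    rintro _ ⟨z, hz, rfl⟩
    exact ⟨z, hz, rfl⟩
  exact le_csSup hfin.bddAbove ⟨z, hz, rfl⟩

lemma specRad_nonneg (A : Matrix (Fin n) (Fin n) ℝ) : 0 ≤ specRad A :=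
  Real.sSup_nonneg fun _ ⟨_, _, hr⟩ ↦ hr ▸ norm_nonneg _

lemma sum_le_card_mul_specRad {A : Matrix (Fin n) (Fin n) ℝ} (hA : A.IsSymm) :
    ∑ i, ∑ j, A i j ≤ n * specRad A := by
  rcases n.eq_zero_or_pos with rfl | hn
  · simp
  have : NeZero n := ⟨hn.ne'⟩
  let Ac := A.map (fun x => (x : ℂ))
  have hAc : Ac.IsHermitian := (isHermitian_iff_isSymm.mpr hA).map _ fun _ ↦ by simp
  obtain ⟨μ, hμ, hle⟩ := (isSymmetric_toEuclideanLin_iff.mpr hAc).exists_hasEigenvalue_re_inner_le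
  have hspec : (μ : ℂ) ∈ spectrum ℂ Ac := spectrum_toLpLin (A := Ac) 2 ▸ hμ.mem_spectrum
  let x : EuclideanSpace ℂ (Fin n) := WithLp.toLp 2 fun _ ↦ 1
  have hquad : re (inner ℂ (Ac.toEuclideanLin x) x) = ∑ i, ∑ j, A i j := by
    simp [x, Ac, PiLp.inner_apply, mulVec, dotProduct]
  have hnorm : ‖x‖ ^ 2 = n := by
    simp [x, EuclideanSpace.norm_eq]
  calc ∑ i, ∑ j, A i j ≤ μ * n := hquad ▸ hnorm ▸ hle x
    _ ≤ n * specRad A := by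
      rw [mul_comm]
      gcongr
      exact (le_abs_self μ).trans (by simpa using norm_le_specRad hspec)

end SpectralRadius

lemma isSymm_corrMat {K Np : ℕ} (φ : Fin K → EuclideanSpace ℂ (Fin Np)) :
    (corrMat φ).IsSymm :=
  IsSymm.ext fun i j ↦ by simp only [corrMat, norm_inner_symm]

theorem specRad_corrMat_ge_general (K Np : ℕ)
    (φ : Fin K → EuclideanSpace ℂ (Fin Np)) (hφ : ∀ k, ‖φ k‖ = 1) :
    (K : ℝ) / (Np : ℝ) ≤ specRad (corrMat φ) := by
  have hwelch : (K : ℝ) ^ 2 ≤ Np * ∑ i, ∑ j, corrMat φ i j := by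
    simpa [hφ, finrank_euclideanSpace_fin, corrMat] using
      sq_sum_norm_sq_le_finrank_mul_sum_norm_inner_sq (𝕜 := ℂ) φ
  have hrayleigh := sum_le_card_mul_specRad (isSymm_corrMat φ)
  have hρ := specRad_nonneg (corrMat φ)
  have hK : (K : ℝ) ≤ specRad (corrMat φ) * Np := by
    rcases K.eq_zero_or_pos with rfl | hK
    · simpa using mul_nonneg hρ (Nat.cast_nonneg Np)
    · have hK' : (0 : ℝ) < K := by exact_mod_cast hK
      nlinarith
  exact div_le_of_le_mul₀ (Nat.cast_nonneg _) hρ hK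

/-- For `K ≥ N_p` unit-norm vectors in `ℂ^{N_p}`, the spectral radius of the squared
correlation matrix `Φ̄` is at least `K/N_p`. -/
theorem specRad_corrMat_ge (K Np : ℕ) (hNp : 0 < Np) (hK : Np ≤ K)
    (φ : Fin K → EuclideanSpace ℂ (Fin Np)) (hφ : ∀ k, ‖φ k‖ = 1) :
    (K : ℝ) / (Np : ℝ) ≤ specRad (corrMat φ) :=
  specRad_corrMat_ge_general K Np φ hφ
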